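/- arXiv:2111.03794 — 2 statements merged into one kernel-verified Lean document; each statement's English description precedes it below -/
import Mathlib

section
/- Symmetrization inequality: the expected uniform deviation of the empirical loss from the expected loss is bounded by twice the Rademacher complexity, i.e. E_{z ∼ μ^{⊗N}}[ sup_{g ∈ ι} ( L(g) − L_N(g)(z) ) ] ≤ 2·C(N). -/
open MeasureTheory

noncomputable section

variable {Z : Type*} [MeasurableSpace Z] {ι : Type*}

/-- The empirical loss of hypothesis `g` on the sample `z` of size `N`:
`L_N(g)(z) = (1/N) ∑ᵢ f g (z i)`. -/
def empLoss (f : ι → Z → ℝ) (N : ℕ) (g : ι) (z : Fin N → Z) : ℝ :=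
  (1 / N) * ∑ i, f g (z i)

/-- The expected loss of hypothesis `g`: `L(g) = ∫ f g dμ`. -/
def expLoss (μ : Measure Z) (f : ι → Z → ℝ) (g : ι) : ℝ :=
  ∫ x, f g x ∂μ

/-- A Rademacher sign `±1` encoded by a Boolean. -/
def rsign (b : Bool) : ℝ := if b then 1 else -1

/-- The fair-coin measure on `Bool`, i.e. the distribution of one Rademacher sign. -/
def coinFlip : Measure Bool := (PMF.uniformOfFintype Bool).toMeasure

/-- The Rademacher complexity of the class `ι` (composed with the loss `f`) with `N` samples:
`C(N) = E_{z ~ μ^N, ξ ~ Unif{±1}^N} [ sup_{g ∈ ι} (1/N) ∑ᵢ ξᵢ f g (zᵢ) ]`. -/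
def radComplexity (μ : Measure Z) (f : ι → Z → ℝ) (N : ℕ) : ℝ :=
  ∫ p : (Fin N → Z) × (Fin N → Bool),
    ⨆ g : ι, (1 / N) * ∑ i, rsign (p.2 i) * f g (p.1 i)
    ∂((Measure.pi fun _ => μ).prod (Measure.pi fun _ => coinFlip))

/-!
Writing `L(g)` as the expectation of the empirical loss on an independent ghost sample `z'` and
pulling the supremum inside that expectation bounds the left side by
`E sup_g (L_N(g)(z') - L_N(g)(z))`. Exchanging `zᵢ` and `z'ᵢ` wherever a fair sign `ξᵢ` is `+1`
preserves the law of `(z, z')` and turns the difference into `(1/N) ∑ᵢ ξᵢ (f g zᵢ - f g z'ᵢ)`.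
The supremum of this is at most the sum of the suprema of its two halves, and as `-ξ` has the
same law as `ξ`, each half has expectation `C(N)`.
-/

open Set

lemma bddAbove_range_of_abs_le {u : ι → ℝ} {c : ℝ} (h : ∀ g, |u g| ≤ c) :
    BddAbove (range u) :=
  ⟨c, forall_mem_range.2 fun g => (le_abs_self _).trans (h g)⟩

lemma abs_ciSup_le [Nonempty ι] {u : ι → ℝ} {c : ℝ} (h : ∀ g, |u g| ≤ c) :
    |⨆ g, u g| ≤ c :=
  let g₀ := Classical.arbitrary ι
  abs_le.2 ⟨(abs_le.1 (h g₀)).1.trans (le_ciSup (bddAbove_range_of_abs_le h) g₀),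
    ciSup_le fun g => (abs_le.1 (h g)).2⟩

lemma abs_one_div_mul_sum_le {N : ℕ} (hN : 0 < N) {t : Fin N → ℝ} {c : ℝ}
    (h : ∀ i, |t i| ≤ c) : |(1 / N : ℝ) * ∑ i, t i| ≤ c := by
  have hN' : (0 : ℝ) < N := by exact_mod_cast hN
  rw [abs_mul, abs_of_pos (by positivity : (0 : ℝ) < 1 / N), one_div_mul_eq_div,
    div_le_iff₀ hN', mul_comm]
  calc |∑ i, t i| ≤ ∑ i, |t i| := Finset.abs_sum_le_sum_abs _ _
    _ ≤ ∑ _i : Fin N, c := Finset.sum_le_sum fun i _ => h i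
    _ = N * c := by simp

section Integral

variable {α : Type*} [MeasurableSpace α] {m : Measure α}

lemma Measurable.integrable_of_abs_le [IsFiniteMeasure m] {F : α → ℝ} (hF : Measurable F)
    {c : ℝ} (h : ∀ x, |F x| ≤ c) : Integrable F m :=
  .of_bound hF.aestronglyMeasurable c (ae_of_all _ h)

lemma ciSup_integral_le_integral_ciSup [Nonempty ι] {F : ι → α → ℝ}
    (hF : ∀ g, Integrable (F g) m) (hsup : Integrable (fun x => ⨆ g, F g x) m)
    (hbdd : ∀ x, BddAbove (range fun g => F g x)) :
    ⨆ g, ∫ x, F g x ∂m ≤ ∫ x, ⨆ g, F g x ∂m :=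
  ciSup_le fun g => integral_mono (hF g) hsup fun x => le_ciSup (hbdd x) g

end Integral

instance : IsProbabilityMeasure coinFlip := by unfold coinFlip; infer_instance

lemma abs_rsign (b : Bool) : |rsign b| = 1 := by cases b <;> simp [rsign]

lemma measurePreserving_not_coinFlip : MeasurePreserving Bool.not coinFlip coinFlip := by
  refine ⟨.of_discrete, Measure.ext_iff_singleton.2 fun b => ?_⟩
  rw [Measure.map_apply .of_discrete (measurableSet_singleton b)]
  cases b <;> simp [coinFlip]

lemma measurePreserving_pi_not {δ : Type*} [Fintype δ] :
    MeasurePreserving (fun (ξ : δ → Bool) i => !ξ i) (Measure.pi fun _ => coinFlip)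
      (Measure.pi fun _ => coinFlip) :=
  measurePreserving_pi _ _ fun _ => measurePreserving_not_coinFlip

lemma integral_comp_pi_not {δ E : Type*} [Fintype δ] [NormedAddCommGroup E] [NormedSpace ℝ E]
    (h : (δ → Bool) → E) :
    ∫ ξ, h (fun i => !ξ i) ∂(Measure.pi fun _ => coinFlip)
      = ∫ ξ, h ξ ∂(Measure.pi fun _ => coinFlip) := by
  conv_rhs => rw [← measurePreserving_pi_not.map_eq]
  rw [integral_map measurePreserving_pi_not.measurable.aemeasurable .of_discrete]

def swapWhere {δ α : Type*} (ξ : δ → Bool) (zz : (δ → α) × (δ → α)) : (δ → α) × (δ → α) :=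
  (fun i => if ξ i then zz.2 i else zz.1 i, fun i => if ξ i then zz.1 i else zz.2 i)

lemma measurePreserving_swapWhere {δ α : Type*} [Fintype δ] [MeasurableSpace α]
    (μ : δ → Measure α) [∀ i, SigmaFinite (μ i)] (ξ : δ → Bool) :
    MeasurePreserving (swapWhere ξ) ((Measure.pi μ).prod (Measure.pi μ))
      ((Measure.pi μ).prod (Measure.pi μ)) := by
  have he := measurePreserving_arrowProdEquivProdArrow α α δ μ μ
  have hswap : MeasurePreserving (fun w i => if ξ i then (w i).swap else w i)
      (Measure.pi fun i => (μ i).prod (μ i)) (Measure.pi fun i => (μ i).prod (μ i)) := by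
    refine measurePreserving_pi _ _ (f := fun i (x : α × α) => if ξ i then x.swap else x)
      fun i => ?_
    cases ξ i
    · exact MeasurePreserving.id ((μ i).prod (μ i))
    · simpa using Measure.measurePreserving_swap (μ := μ i) (ν := μ i)
  convert he.comp (hswap.comp he.symm) using 1
  ext zz i <;> simp [swapWhere, MeasurableEquiv.arrowProdEquivProdArrow,
    Equiv.arrowProdEquivProdArrow] <;> split <;> rfl

def ghostDeviation (f : ι → Z → ℝ) (N : ℕ) (zz : (Fin N → Z) × (Fin N → Z)) : ℝ :=
  ⨆ g, empLoss f N g zz.2 - empLoss f N g zz.1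

def rademacherAvg (f : ι → Z → ℝ) (N : ℕ) (g : ι) (p : (Fin N → Z) × (Fin N → Bool)) : ℝ :=
  (1 / N) * ∑ i, rsign (p.2 i) * f g (p.1 i)

def rademacherSup (f : ι → Z → ℝ) (N : ℕ) (p : (Fin N → Z) × (Fin N → Bool)) : ℝ :=
  ⨆ g, rademacherAvg f N g p

section Pointwise

variable {X : Type*} {f : ι → X → ℝ} {N : ℕ} {C : ℝ}

lemma abs_empLoss_le (hN : 0 < N) {g : ι} (hf : ∀ x, |f g x| ≤ C) (z : Fin N → X) :
    |empLoss f N g z| ≤ C :=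
  abs_one_div_mul_sum_le hN fun i => hf (z i)

lemma abs_empLoss_sub_empLoss_le (hN : 0 < N) {g : ι} (hf : ∀ x, |f g x| ≤ C)
    (z z' : Fin N → X) : |empLoss f N g z' - empLoss f N g z| ≤ 2 * C :=
  (abs_sub _ _).trans <| by linarith [abs_empLoss_le hN hf z', abs_empLoss_le hN hf z]

lemma abs_rademacherAvg_le (hN : 0 < N) {g : ι} (hf : ∀ x, |f g x| ≤ C)
    (p : (Fin N → X) × (Fin N → Bool)) : |rademacherAvg f N g p| ≤ C :=
  abs_one_div_mul_sum_le hN fun i => by rw [abs_mul, abs_rsign, one_mul]; exact hf _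

lemma abs_ghostDeviation_le [Nonempty ι] (hN : 0 < N) (hf : ∀ g x, |f g x| ≤ C)
    (zz : (Fin N → X) × (Fin N → X)) : |ghostDeviation f N zz| ≤ 2 * C :=
  abs_ciSup_le fun g => abs_empLoss_sub_empLoss_le hN (hf g) zz.1 zz.2

lemma abs_rademacherSup_le [Nonempty ι] (hN : 0 < N) (hf : ∀ g x, |f g x| ≤ C)
    (p : (Fin N → X) × (Fin N → Bool)) : |rademacherSup f N p| ≤ C :=
  abs_ciSup_le fun g => abs_rademacherAvg_le hN (hf g) p

lemma empLoss_swapWhere_sub (g : ι) (ξ : Fin N → Bool) (zz : (Fin N → X) × (Fin N → X)) :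
    empLoss f N g (swapWhere ξ zz).2 - empLoss f N g (swapWhere ξ zz).1
      = rademacherAvg f N g (zz.1, ξ) + rademacherAvg f N g (zz.2, fun i => !ξ i) := by
  simp only [empLoss, rademacherAvg, swapWhere, ← mul_sub, ← mul_add, ← Finset.sum_sub_distrib,
    ← Finset.sum_add_distrib]
  congr 1
  refine Finset.sum_congr rfl fun i _ => ?_
  cases ξ i <;> simp [rsign] <;> ring

lemma ghostDeviation_swapWhere_le [Nonempty ι] (hN : 0 < N) (hf : ∀ g x, |f g x| ≤ C)
    (ξ : Fin N → Bool) (zz : (Fin N → X) × (Fin N → X)) :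
    ghostDeviation f N (swapWhere ξ zz)
      ≤ rademacherSup f N (zz.1, ξ) + rademacherSup f N (zz.2, fun i => !ξ i) := by
  simp only [ghostDeviation, empLoss_swapWhere_sub]
  exact ciSup_add_le_ciSup_add_ciSup
    (bddAbove_range_of_abs_le fun g => abs_rademacherAvg_le hN (hf g) _)
    (bddAbove_range_of_abs_le fun g => abs_rademacherAvg_le hN (hf g) _)

end Pointwise

section Symmetrization

variable {μ : Measure Z} {f : ι → Z → ℝ} {N : ℕ} {C : ℝ}

local notation "μᴺ" => Measure.pi fun _ : Fin N => μ

lemma abs_expLoss_le [IsProbabilityMeasure μ] {g : ι} (hf : ∀ x, |f g x| ≤ C) :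
    |expLoss μ f g| ≤ C := by
  simpa [expLoss] using norm_integral_le_of_norm_le_const (μ := μ) (f := f g) (ae_of_all _ hf)

lemma integral_empLoss [IsProbabilityMeasure μ] (hN : N ≠ 0) {g : ι} (hf : Integrable (f g) μ) :
    ∫ z, empLoss f N g z ∂μᴺ = expLoss μ f g := by
  have hcoord (i : Fin N) : ∫ z, f g (z i) ∂μᴺ = expLoss μ f g :=
    integral_comp_eval hf.aestronglyMeasurable
  unfold empLoss
  rw [integral_const_mul, integral_finsetSum _ fun i _ => integrable_comp_eval hf]
  simp only [hcoord, Finset.sum_const, Finset.card_univ, Fintype.card_fin, nsmul_eq_mul]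
  field_simp

lemma measurable_empLoss {g : ι} (hf : Measurable (f g)) : Measurable (empLoss f N g) := by
  unfold empLoss; fun_prop

lemma integrable_ghostDeviation [Countable ι] [Nonempty ι] (hN : 0 < N)
    (hmeas : ∀ g, Measurable (f g)) (hf : ∀ g x, |f g x| ≤ C)
    {m : Measure ((Fin N → Z) × (Fin N → Z))} [IsFiniteMeasure m] :
    Integrable (ghostDeviation f N) m :=
  (Measurable.iSup fun g => ((measurable_empLoss (hmeas g)).comp measurable_snd).sub
    ((measurable_empLoss (hmeas g)).comp measurable_fst)).integrable_of_abs_le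
    (abs_ghostDeviation_le hN hf)

lemma integrable_rademacherSup [Countable ι] [Nonempty ι] (hN : 0 < N)
    (hmeas : ∀ g, Measurable (f g)) (hf : ∀ g x, |f g x| ≤ C)
    {m : Measure ((Fin N → Z) × (Fin N → Bool))} [IsFiniteMeasure m] :
    Integrable (rademacherSup f N) m :=
  (Measurable.iSup fun g => by unfold rademacherAvg; fun_prop).integrable_of_abs_le
    (abs_rademacherSup_le hN hf)

variable [IsProbabilityMeasure μ] [Countable ι] [Nonempty ι]

lemma iSup_expLoss_sub_empLoss_le_integral_ghostDeviation (hN : 0 < N)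
    (hmeas : ∀ g, Measurable (f g)) (hf : ∀ g x, |f g x| ≤ C) (z : Fin N → Z) :
    ⨆ g, expLoss μ f g - empLoss f N g z ≤ ∫ z', ghostDeviation f N (z, z') ∂μᴺ := by
  have hint (g : ι) : Integrable (empLoss f N g) μᴺ :=
    (measurable_empLoss (hmeas g)).integrable_of_abs_le (abs_empLoss_le hN (hf g))
  have hgap (g : ι) : expLoss μ f g - empLoss f N g z
      = ∫ z', empLoss f N g z' - empLoss f N g z ∂μᴺ := by
    rw [integral_sub (hint g) (integrable_const _), integral_const, probReal_univ, one_smul,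
      integral_empLoss hN.ne' ((hmeas g).integrable_of_abs_le (hf g))]
  have hsup : Integrable (fun z' => ghostDeviation f N (z, z')) μᴺ :=
    (integrable_ghostDeviation hN hmeas hf).comp_measurable measurable_prodMk_left
  simp only [hgap]
  exact ciSup_integral_le_integral_ciSup (fun g => (hint g).sub (integrable_const _)) hsup
    fun z' => bddAbove_range_of_abs_le fun g => abs_empLoss_sub_empLoss_le hN (hf g) z z'

lemma integral_iSup_expLoss_sub_empLoss_le (hN : 0 < N)
    (hmeas : ∀ g, Measurable (f g)) (hf : ∀ g x, |f g x| ≤ C) :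
    ∫ z, (⨆ g, expLoss μ f g - empLoss f N g z) ∂μᴺ
      ≤ ∫ zz, ghostDeviation f N zz ∂(μᴺ.prod μᴺ) := by
  have hD := integrable_ghostDeviation hN hmeas hf (m := μᴺ.prod μᴺ)
  rw [integral_prod _ hD]
  refine integral_mono ?_ hD.integral_prod_left
    (iSup_expLoss_sub_empLoss_le_integral_ghostDeviation hN hmeas hf)
  refine (Measurable.iSup fun g => measurable_const.sub (measurable_empLoss (hmeas g))
    ).integrable_of_abs_le (c := 2 * C) fun z => abs_ciSup_le fun g => (abs_sub _ _).trans ?_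
  linarith [abs_expLoss_le (μ := μ) (hf g), abs_empLoss_le hN (hf g) z]

lemma integral_ghostDeviation_le_integral_rademacherSup_add (hN : 0 < N)
    (hmeas : ∀ g, Measurable (f g)) (hf : ∀ g x, |f g x| ≤ C) (ξ : Fin N → Bool) :
    ∫ zz, ghostDeviation f N zz ∂(μᴺ.prod μᴺ)
      ≤ (∫ z, rademacherSup f N (z, ξ) ∂μᴺ)
        + ∫ z, rademacherSup f N (z, fun i => !ξ i) ∂μᴺ := by
  have hswap := measurePreserving_swapWhere (fun _ : Fin N => μ) ξ
  have hR₁ : Integrable (fun zz : (Fin N → Z) × (Fin N → Z) => rademacherSup f N (zz.1, ξ))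
      (μᴺ.prod μᴺ) :=
    (integrable_rademacherSup hN hmeas hf).comp_measurable (by fun_prop)
  have hR₂ : Integrable
      (fun zz : (Fin N → Z) × (Fin N → Z) => rademacherSup f N (zz.2, fun i => !ξ i))
      (μᴺ.prod μᴺ) :=
    (integrable_rademacherSup hN hmeas hf).comp_measurable (by fun_prop)
  calc _ = ∫ zz, ghostDeviation f N (swapWhere ξ zz) ∂(μᴺ.prod μᴺ) := by
        conv_lhs => rw [← hswap.map_eq]
        exact integral_map hswap.measurable.aemeasurable
          (integrable_ghostDeviation hN hmeas hf).aestronglyMeasurable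
    _ ≤ ∫ zz, rademacherSup f N (zz.1, ξ) + rademacherSup f N (zz.2, fun i => !ξ i)
          ∂(μᴺ.prod μᴺ) :=
        integral_mono ((integrable_ghostDeviation hN hmeas hf).comp_measurable hswap.measurable)
          (hR₁.add hR₂) (ghostDeviation_swapWhere_le hN hf ξ)
    _ = _ := by
        rw [integral_add hR₁ hR₂,
          integral_fun_fst (fun z => rademacherSup f N (z, ξ)),
          integral_fun_snd (fun z => rademacherSup f N (z, fun i => !ξ i))]
        simp

lemma integral_ghostDeviation_le_two_mul_radComplexity (hN : 0 < N)
    (hmeas : ∀ g, Measurable (f g)) (hf : ∀ g x, |f g x| ≤ C) :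
    ∫ zz, ghostDeviation f N zz ∂(μᴺ.prod μᴺ) ≤ 2 * radComplexity μ f N := by
  let r (ξ : Fin N → Bool) : ℝ := ∫ z, rademacherSup f N (z, ξ) ∂μᴺ
  have hrad : radComplexity μ f N = ∫ ξ, r ξ ∂(Measure.pi fun _ => coinFlip) :=
    integral_prod_symm _ (integrable_rademacherSup hN hmeas hf)
  calc _ = ∫ _ξ, ∫ zz, ghostDeviation f N zz ∂(μᴺ.prod μᴺ) ∂(Measure.pi fun _ => coinFlip) := by
        simp
    _ ≤ ∫ ξ, r ξ + r (fun i => !ξ i) ∂(Measure.pi fun _ => coinFlip) :=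
        integral_mono (integrable_const _) .of_finite
          (integral_ghostDeviation_le_integral_rademacherSup_add hN hmeas hf)
    _ = 2 * radComplexity μ f N := by
        rw [integral_add .of_finite .of_finite, integral_comp_pi_not r, hrad, two_mul]

end Symmetrization

theorem symmetrization_general
    (μ : Measure Z) [IsProbabilityMeasure μ] [Countable ι]
    (f : ι → Z → ℝ) (hmeas : ∀ g, Measurable (f g))
    (hbound : ∀ g x, f g x ∈ Set.Icc (0 : ℝ) 1)
    (N : ℕ) (hN : 0 < N) :
    (∫ z, (⨆ g : ι, expLoss μ f g - empLoss f N g z)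
        ∂(Measure.pi fun _ : Fin N => μ))
      ≤ 2 * radComplexity μ f N := by
  rcases isEmpty_or_nonempty ι with hι | hι
  · simp [radComplexity]
  have hf (g : ι) (x : Z) : |f g x| ≤ 1 :=
    abs_le.2 ⟨by linarith [(hbound g x).1], (hbound g x).2⟩
  exact (integral_iSup_expLoss_sub_empLoss_le hN hmeas hf).trans
    (integral_ghostDeviation_le_two_mul_radComplexity hN hmeas hf)

/-- **Symmetrization inequality**: the expected uniform deviation of the empirical loss from
the expected loss is bounded by twice the Rademacher complexity:
`E_{z ~ μ^{⊗N}} [ sup_{g ∈ ι} (L(g) - L_N(g)(z)) ] ≤ 2 C(N)`. -/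
theorem symmetrization
    (μ : Measure Z) [IsProbabilityMeasure μ] [Countable ι] [Nonempty ι]
    (f : ι → Z → ℝ) (hmeas : ∀ g, Measurable (f g))
    (hbound : ∀ g x, f g x ∈ Set.Icc (0 : ℝ) 1)
    (N : ℕ) (hN : 0 < N) :
    (∫ z, (⨆ g : ι, expLoss μ f g - empLoss f N g z)
        ∂(Measure.pi fun _ : Fin N => μ))
      ≤ 2 * radComplexity μ f N :=
  symmetrization_general μ f hmeas hbound N hN
end
end

section
/- High-probability bound on the uniform deviation: for i.i.d. samples z₁,…,z_N ∼ μ and any δ ∈ (0,1), with probability at least 1 − δ, sup_{g ∈ ι} ( L(g) − L_N(g)(z) ) ≤ E_{z' ∼ μ^{⊗N}}[ sup_{g ∈ ι} ( L(g) − L_N(g)(z') ) ] + √( log(1/δ) / (2N) ). -/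
open MeasureTheory

noncomputable section

variable {Z : Type*} [MeasurableSpace Z] {ι : Type*}

/-!
Write `Φ(z) = sup_g (L(g) - L_N(g)(z))`. Replacing one sample point moves every `L_N(g)` by at
most `1/N`, hence moves `Φ` by at most `1/N`. McDiarmid's inequality then makes `Φ - 𝔼Φ`
sub-Gaussian with variance proxy `N (1/(2N))² = 1/(4N)`: integrate out one coordinate at a time
and apply Hoeffding's lemma to the increment in that coordinate, which is confined to an interval
of width `1/N`. The Chernoff bound gives `ℙ(Φ - 𝔼Φ ≥ ε) ≤ exp (-2Nε²) = δ` for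
`ε = √(log (1/δ) / (2N))`.
-/

open ProbabilityTheory Function
open scoped NNReal

lemma measurable_finCons {W : Type*} [MeasurableSpace W] {n : ℕ} :
    Measurable (fun p : W × (Fin n → W) ↦ (Fin.cons p.1 p.2 : Fin (n + 1) → W)) := by
  refine measurable_pi_iff.2 fun i ↦ Fin.cases ?_ (fun j ↦ ?_) i
  · exact measurable_fst
  · exact (measurable_pi_apply j).comp measurable_snd

namespace ProbabilityTheory

section SubGaussian

variable {Ω : Type*} [MeasurableSpace Ω] {μ : Measure Ω}

lemma hasSubgaussianMGF_of_forall_sub_le [IsProbabilityMeasure μ] {X : Ω → ℝ}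
    (hX : AEMeasurable X μ) {c : ℝ≥0} (hc : ∀ ω ω', X ω - X ω' ≤ c) :
    HasSubgaussianMGF (fun ω ↦ X ω - μ[X]) ((c / 2) ^ 2) μ := by
  have : Nonempty Ω := nonempty_of_isProbabilityMeasure μ
  have hbdd : BddBelow (Set.range X) :=
    ⟨X (Classical.arbitrary Ω) - c, by rintro _ ⟨ω, rfl⟩; linarith [hc (Classical.arbitrary Ω) ω]⟩
  have hmem (ω : Ω) : X ω ∈ Set.Icc (⨅ ω, X ω) ((⨅ ω, X ω) + c) := by
    have : X ω - c ≤ ⨅ ω, X ω := le_ciInf fun ω' ↦ by linarith [hc ω ω']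
    exact ⟨ciInf_le hbdd ω, by linarith⟩
  simpa using hasSubgaussianMGF_of_mem_Icc hX (ae_of_all _ hmem)

lemma HasSubgaussianMGF.comp_measurePreserving {Ω' : Type*} [MeasurableSpace Ω']
    {μ' : Measure Ω'} {X : Ω → ℝ} {c : ℝ≥0} (h : HasSubgaussianMGF X c μ) {e : Ω' → Ω}
    (he : MeasurePreserving e μ' μ) : HasSubgaussianMGF (X ∘ e) c μ' :=
  .of_map he.measurable.aemeasurable (by rwa [he.map_eq])

lemma HasSubgaussianMGF.ofReal_one_sub_le_measure_le_add_sqrt [IsProbabilityMeasure μ]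
    {X : Ω → ℝ} {m : ℝ} {c : ℝ≥0} (h : HasSubgaussianMGF (fun ω ↦ X ω - m) c μ) (hc : c ≠ 0)
    {δ : ℝ} (hδ : 0 < δ) (hδ₁ : δ ≤ 1) :
    ENNReal.ofReal (1 - δ) ≤ μ {ω | X ω ≤ m + √(2 * c * Real.log (1 / δ))} := by
  set ε := √(2 * c * Real.log (1 / δ))
  have hε : ε ^ 2 = 2 * c * Real.log (1 / δ) :=
    Real.sq_sqrt (by have := Real.log_nonneg (one_le_one_div hδ hδ₁); positivity)
  have h_tail : μ.real {ω | ε ≤ X ω - m} ≤ δ := by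
    calc μ.real {ω | ε ≤ X ω - m} ≤ Real.exp (-ε ^ 2 / (2 * c)) := h.measure_ge_le (by positivity)
      _ = δ := by
        rw [hε, mul_comm, ← neg_mul, mul_div_assoc, div_self (by positivity), mul_one,
          one_div, Real.log_inv, neg_neg, Real.exp_log hδ]
  have h_compl : {ω | X ω ≤ m + ε}ᶜ ⊆ {ω | ε ≤ X ω - m} := fun ω hω ↦ by
    have : m + ε < X ω := not_le.1 hω
    show ε ≤ X ω - m
    linarith
  have h_compl_le : μ {ω | X ω ≤ m + ε}ᶜ ≤ ENNReal.ofReal δ :=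
    (measure_mono h_compl).trans
      ((ENNReal.le_ofReal_iff_toReal_le (measure_ne_top _ _) hδ.le).2 h_tail)
  calc ENNReal.ofReal (1 - δ) = 1 - ENNReal.ofReal δ := by
        rw [ENNReal.ofReal_sub _ hδ.le, ENNReal.ofReal_one]
    _ ≤ 1 - μ {ω | X ω ≤ m + ε}ᶜ := tsub_le_tsub_left h_compl_le 1
    _ ≤ μ {ω | X ω ≤ m + ε} := by
        rw [tsub_le_iff_right, ← measure_univ (μ := μ)]
        exact measure_univ_le_add_compl _

variable {β : Type*} [MeasurableSpace β] {ν : Measure β}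

lemma hasSubgaussianMGF_prod_sub_integral [IsFiniteMeasure μ] [IsFiniteMeasure ν]
    {H : Ω × β → ℝ} (hH : Measurable H) {C : ℝ} (hC : ∀ p, |H p| ≤ C) {c₁ c₂ : ℝ≥0}
    (h_sec : ∀ b, HasSubgaussianMGF (fun a ↦ H (a, b) - ∫ a', H (a', b) ∂μ) c₁ μ)
    (h_avg : HasSubgaussianMGF (fun b ↦ ∫ a, H (a, b) ∂μ - ∫ p, H p ∂(μ.prod ν)) c₂ ν) :
    HasSubgaussianMGF (fun p ↦ H p - ∫ p', H p' ∂(μ.prod ν)) (c₁ + c₂) (μ.prod ν) := by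
  set m := ∫ p, H p ∂(μ.prod ν)
  set G := fun b ↦ ∫ a, H (a, b) ∂μ
  have h_int (t : ℝ) : Integrable (fun p ↦ Real.exp (t * (H p - m))) (μ.prod ν) :=
    integrable_exp_mul_of_mem_Icc (a := -C - m) (b := C - m) (hH.sub_const m).aemeasurable
      (ae_of_all _ fun p ↦ by
        obtain ⟨h₁, h₂⟩ := abs_le.mp (hC p)
        exact ⟨by linarith, by linarith⟩)
  refine ⟨h_int, fun t ↦ ?_⟩
  have h_split (b : β) : ∫ a, Real.exp (t * (H (a, b) - m)) ∂μ
      = mgf (fun a ↦ H (a, b) - G b) μ t * Real.exp (t * (G b - m)) := by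
    rw [mgf, ← integral_mul_const]
    congr 1 with a
    rw [← Real.exp_add]
    congr 1
    ring
  calc mgf (fun p ↦ H p - m) (μ.prod ν) t
      = ∫ b, mgf (fun a ↦ H (a, b) - G b) μ t * Real.exp (t * (G b - m)) ∂ν := by
        rw [mgf, integral_prod_symm _ (h_int t)]
        simp_rw [h_split]
    _ ≤ ∫ b, Real.exp (c₁ * t ^ 2 / 2) * Real.exp (t * (G b - m)) ∂ν := by
        refine integral_mono_of_nonneg (ae_of_all _ fun b ↦ ?_)
          ((h_avg.integrable_exp_mul t).const_mul _) (ae_of_all _ fun b ↦ ?_)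
        · exact mul_nonneg mgf_nonneg (Real.exp_pos _).le
        · exact mul_le_mul_of_nonneg_right ((h_sec b).mgf_le t) (Real.exp_pos _).le
    _ = Real.exp (c₁ * t ^ 2 / 2) * mgf (fun b ↦ G b - m) ν t := integral_const_mul _ _
    _ ≤ Real.exp (c₁ * t ^ 2 / 2) * Real.exp (c₂ * t ^ 2 / 2) := by
        gcongr
        exact h_avg.mgf_le t
    _ = Real.exp (↑(c₁ + c₂) * t ^ 2 / 2) := by
        rw [← Real.exp_add]
        congr 1
        push_cast
        ring

end SubGaussian

section BoundedDifferences

variable {W : Type*}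

def HasBoundedDifferences [DecidableEq ι] (F : (ι → W) → ℝ) (c : ℝ≥0) : Prop :=
  ∀ z i x, F (update z i x) - F z ≤ c

namespace HasBoundedDifferences

variable {n : ℕ} {F : (Fin (n + 1) → W) → ℝ} {c : ℝ≥0}

lemma cons_sub_cons_le (h : HasBoundedDifferences F c) (x y : W) (w : Fin n → W) :
    F (Fin.cons x w) - F (Fin.cons y w) ≤ c := by
  simpa only [Fin.update_cons_zero] using h (Fin.cons y w) 0 x

lemma integral_cons [MeasurableSpace W] {μ : Measure W} [IsProbabilityMeasure μ]
    (hF : Measurable F) {C : ℝ} (hC : ∀ z, |F z| ≤ C) (h : HasBoundedDifferences F c) :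
    HasBoundedDifferences (fun w ↦ ∫ x, F (Fin.cons x w) ∂μ) c := by
  intro w i y
  have h_int (w : Fin n → W) : Integrable (fun x ↦ F (Fin.cons x w)) μ :=
    .of_bound (hF.comp (measurable_finCons.comp measurable_prodMk_right)).aestronglyMeasurable C
      (ae_of_all _ fun x ↦ hC _)
  have h_int_update := h_int (update w i y)
  simp only [Fin.cons_update] at h_int_update ⊢
  calc ∫ x, F (update (Fin.cons x w) i.succ y) ∂μ - ∫ x, F (Fin.cons x w) ∂μ
      = ∫ x, (F (update (Fin.cons x w) i.succ y) - F (Fin.cons x w)) ∂μ :=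
        (integral_sub h_int_update (h_int w)).symm
    _ ≤ ∫ _, (c : ℝ) ∂μ :=
        integral_mono (h_int_update.sub (h_int w)) (integrable_const _) fun x ↦ h _ _ _
    _ = c := by simp

end HasBoundedDifferences

/-- **McDiarmid's inequality**, in sub-Gaussian form. -/
theorem hasSubgaussianMGF_sub_integral_of_hasBoundedDifferences [MeasurableSpace W]
    {μ : Measure W} [IsProbabilityMeasure μ] {n : ℕ} {F : (Fin n → W) → ℝ} (hF : Measurable F)
    {C : ℝ} (hC : ∀ z, |F z| ≤ C) {c : ℝ≥0} (hFc : HasBoundedDifferences F c) :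
    HasSubgaussianMGF (fun z ↦ F z - ∫ z', F z' ∂(Measure.pi fun _ ↦ μ)) (n * (c / 2) ^ 2)
      (Measure.pi fun _ ↦ μ) := by
  induction n generalizing C with
  | zero =>
    have h_zero : (fun z ↦ F z - ∫ z', F z' ∂(Measure.pi fun _ ↦ μ)) = fun _ ↦ 0 := by
      funext z
      rw [show F = fun _ ↦ F z from funext fun z' ↦ congrArg F (Subsingleton.elim z' z)]
      simp
    simp [h_zero]
  | succ n ih =>
    set H : W × (Fin n → W) → ℝ := fun p ↦ F (Fin.cons p.1 p.2)
    have hH : Measurable H := hF.comp measurable_finCons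
    have h_sec (w : Fin n → W) := hasSubgaussianMGF_of_forall_sub_le (μ := μ)
      (X := fun x ↦ H (x, w)) (hH.comp measurable_prodMk_right).aemeasurable
      (hFc.cons_sub_cons_le · · w)
    have h_fubini : ∫ p, H p ∂(μ.prod (Measure.pi fun _ ↦ μ))
        = ∫ w, ∫ x, H (x, w) ∂μ ∂(Measure.pi fun _ ↦ μ) :=
      integral_prod_symm _ (.of_bound hH.aestronglyMeasurable C (ae_of_all _ fun p ↦ hC _))
    have hG_bdd (w : Fin n → W) : |∫ x, H (x, w) ∂μ| ≤ C := by
      simpa using norm_integral_le_of_norm_le_const (μ := μ) (f := fun x ↦ H (x, w))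
        (ae_of_all _ fun x ↦ hC (Fin.cons x w))
    have h_avg := ih hH.stronglyMeasurable.integral_prod_left'.measurable hG_bdd
      (hFc.integral_cons hF hC)
    rw [← h_fubini] at h_avg
    have h_prod := hasSubgaussianMGF_prod_sub_integral hH (fun p ↦ hC _) h_sec h_avg
    have he := measurePreserving_piFinSuccAbove (fun _ : Fin (n + 1) ↦ μ) 0
    have hFH : F = H ∘ MeasurableEquiv.piFinSuccAbove (fun _ ↦ W) 0 := by
      funext z
      simp [H, MeasurableEquiv.piFinSuccAbove]
    have h_mean : ∫ z, F z ∂(Measure.pi fun _ ↦ μ)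
        = ∫ p, H p ∂(μ.prod (Measure.pi fun _ ↦ μ)) := by
      rw [hFH]
      exact he.integral_comp' H
    have h_param : ((n + 1 : ℕ) : ℝ≥0) * (c / 2) ^ 2 = (c / 2) ^ 2 + n * (c / 2) ^ 2 := by
      push_cast
      ring
    rw [h_mean, h_param, hFH]
    exact h_prod.comp_measurePreserving he

end BoundedDifferences

end ProbabilityTheory

section UniformDeviation

variable {f : ι → Z → ℝ} {N : ℕ}

lemma expLoss_mem_Icc (μ : Measure Z) [IsProbabilityMeasure μ] {g : ι}
    (hg : ∀ x, f g x ∈ Set.Icc (0 : ℝ) 1) : expLoss μ f g ∈ Set.Icc (0 : ℝ) 1 := by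
  refine ⟨integral_nonneg fun x ↦ (hg x).1, ?_⟩
  calc expLoss μ f g ≤ ∫ _, (1 : ℝ) ∂μ :=
        integral_mono_of_nonneg (ae_of_all _ fun x ↦ (hg x).1) (integrable_const _)
          (ae_of_all _ fun x ↦ (hg x).2)
    _ = 1 := by simp

omit [MeasurableSpace Z] in
lemma empLoss_mem_Icc {g : ι} (hg : ∀ x, f g x ∈ Set.Icc (0 : ℝ) 1) (z : Fin N → Z) :
    empLoss f N g z ∈ Set.Icc (0 : ℝ) 1 := by
  refine ⟨mul_nonneg (by positivity) (Finset.sum_nonneg fun i _ ↦ (hg (z i)).1), ?_⟩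
  calc empLoss f N g z ≤ 1 / N * ∑ _i : Fin N, (1 : ℝ) :=
        mul_le_mul_of_nonneg_left (Finset.sum_le_sum fun i _ ↦ (hg (z i)).2) (by positivity)
    _ ≤ 1 := by
        rw [Finset.sum_const, Finset.card_univ, Fintype.card_fin, nsmul_one, one_div]
        exact inv_mul_le_one_of_le₀ le_rfl (Nat.cast_nonneg N)

omit [MeasurableSpace Z] in
lemma empLoss_sub_empLoss_update_le {g : ι} (hg : ∀ x, f g x ∈ Set.Icc (0 : ℝ) 1)
    (z : Fin N → Z) (i : Fin N) (x : Z) :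
    empLoss f N g z - empLoss f N g (update z i x) ≤ (N : ℝ)⁻¹ := by
  have h_sum : ∑ j, f g (z j) - ∑ j, f g (update z i x j) = f g (z i) - f g x := by
    rw [← Finset.sum_sub_distrib, Finset.sum_eq_single i (fun j _ hj ↦ by simp [hj]) (by simp)]
    simp
  rw [empLoss, empLoss, ← mul_sub, h_sum, one_div]
  calc (N : ℝ)⁻¹ * (f g (z i) - f g x) ≤ (N : ℝ)⁻¹ * 1 :=
        mul_le_mul_of_nonneg_left (by linarith [(hg (z i)).2, (hg x).1]) (by positivity)
    _ = (N : ℝ)⁻¹ := mul_one _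

def uniformDeviation (μ : Measure Z) (f : ι → Z → ℝ) (N : ℕ) (z : Fin N → Z) : ℝ :=
  ⨆ g, expLoss μ f g - empLoss f N g z

variable {μ : Measure Z}

lemma abs_expLoss_sub_empLoss_le_one [IsProbabilityMeasure μ]
    (hf : ∀ g x, f g x ∈ Set.Icc (0 : ℝ) 1) (g : ι) (z : Fin N → Z) :
    |expLoss μ f g - empLoss f N g z| ≤ 1 := by
  obtain ⟨hL₀, hL₁⟩ := expLoss_mem_Icc μ (hf g)
  obtain ⟨hE₀, hE₁⟩ := empLoss_mem_Icc (hf g) z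
  exact abs_le.2 ⟨by linarith, by linarith⟩

lemma bddAbove_range_expLoss_sub_empLoss [IsProbabilityMeasure μ]
    (hf : ∀ g x, f g x ∈ Set.Icc (0 : ℝ) 1) (z : Fin N → Z) :
    BddAbove (Set.range fun g ↦ expLoss μ f g - empLoss f N g z) :=
  ⟨1, by rintro _ ⟨g, rfl⟩; exact (abs_le.1 (abs_expLoss_sub_empLoss_le_one hf g z)).2⟩

lemma abs_uniformDeviation_le_one [IsProbabilityMeasure μ] [Nonempty ι]
    (hf : ∀ g x, f g x ∈ Set.Icc (0 : ℝ) 1) (z : Fin N → Z) : |uniformDeviation μ f N z| ≤ 1 := by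
  refine abs_le.2 ⟨?_, ciSup_le fun g ↦ (abs_le.1 (abs_expLoss_sub_empLoss_le_one hf g z)).2⟩
  obtain ⟨g⟩ := ‹Nonempty ι›
  exact (abs_le.1 (abs_expLoss_sub_empLoss_le_one hf g z)).1.trans
    (le_ciSup (bddAbove_range_expLoss_sub_empLoss hf z) g)

lemma measurable_uniformDeviation [Countable ι] (hmeas : ∀ g, Measurable (f g)) :
    Measurable (uniformDeviation μ f N) :=
  .iSup fun g ↦ measurable_const.sub <| measurable_const.mul <|
    Finset.measurable_sum _ fun i _ ↦ (hmeas g).comp (measurable_pi_apply i)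

lemma hasBoundedDifferences_uniformDeviation [IsProbabilityMeasure μ] [Nonempty ι]
    (hf : ∀ g x, f g x ∈ Set.Icc (0 : ℝ) 1) :
    HasBoundedDifferences (uniformDeviation μ f N) (N : ℝ≥0)⁻¹ := by
  intro z i x
  rw [sub_le_iff_le_add, NNReal.coe_inv, NNReal.coe_natCast]
  refine ciSup_le fun g ↦ ?_
  calc expLoss μ f g - empLoss f N g (update z i x)
      ≤ (N : ℝ)⁻¹ + (expLoss μ f g - empLoss f N g z) := by
        linarith [empLoss_sub_empLoss_update_le (hf g) z i x]
    _ ≤ (N : ℝ)⁻¹ + uniformDeviation μ f N z := by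
        gcongr
        exact le_ciSup (bddAbove_range_expLoss_sub_empLoss hf z) g

end UniformDeviation

/-- **High-probability bound on the uniform deviation**: for i.i.d. samples `z ~ μ^{⊗N}` and
`δ ∈ (0,1)`, with probability at least `1 - δ`,
`sup_{g ∈ ι} (L(g) - L_N(g)(z)) ≤ E_{z'} [sup_{g ∈ ι} (L(g) - L_N(g)(z'))] + √(log(1/δ)/(2N))`. -/
theorem uniform_deviation_high_probability
    (μ : Measure Z) [IsProbabilityMeasure μ] [Countable ι] [Nonempty ι]
    (f : ι → Z → ℝ) (hmeas : ∀ g, Measurable (f g))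
    (hbound : ∀ g x, f g x ∈ Set.Icc (0 : ℝ) 1)
    (N : ℕ) (hN : 0 < N) (δ : ℝ) (hδ : δ ∈ Set.Ioo (0 : ℝ) 1) :
    (Measure.pi fun _ : Fin N => μ)
      {z | (⨆ g : ι, expLoss μ f g - empLoss f N g z) ≤
        (∫ z', (⨆ g : ι, expLoss μ f g - empLoss f N g z')
            ∂(Measure.pi fun _ : Fin N => μ)) +
          Real.sqrt (Real.log (1 / δ) / (2 * N))}
      ≥ ENNReal.ofReal (1 - δ) := by
  have h_subG := hasSubgaussianMGF_sub_integral_of_hasBoundedDifferences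
    (μ := μ) (F := uniformDeviation μ f N) (measurable_uniformDeviation hmeas)
    (abs_uniformDeviation_le_one hbound) (hasBoundedDifferences_uniformDeviation hbound)
  have hN' : (N : ℝ) ≠ 0 := by positivity
  have h_proxy : (N * ((N : ℝ≥0)⁻¹ / 2) ^ 2 : ℝ≥0) ≠ 0 := by positivity
  have h_width : 2 * ((N * ((N : ℝ≥0)⁻¹ / 2) ^ 2 : ℝ≥0) : ℝ) * Real.log (1 / δ)
      = Real.log (1 / δ) / (2 * N) := by
    push_cast
    field_simp
  have h := h_subG.ofReal_one_sub_le_measure_le_add_sqrt h_proxy hδ.1 hδ.2.le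
  rwa [h_width] at h
end
end
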